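/- arXiv:1510.06249 — 3 statements merged into one kernel-verified Lean document; each statement's English description precedes it below -/
import Mathlib

section
/- Let M be a finite length module over a ring R and let E_1, …, E_s be representatives of the isomorphism classes of simple composition factors of M. Let M_i be the maximal submodule of M all of whose composition factors are isomorphic to E_i. If Ext¹_R(E_i, E_j) = 0 for all i ≠ j, then M is the direct sum of its isotypic components: M = M_1 ⊕ ⋯ ⊕ M_s. -/
/-!
Having all composition factors in an isomorphism-closed class of simple modules is stable under
extensions, so the isotypic part `Mᵢ`, a finite sup of `Eᵢ`-isotypic submodules, is itself
`Eᵢ`-isotypic; and `Mᵢ` meets `⨆ j ≠ i, Mⱼ` trivially, since a simple submodule of the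
intersection would be isomorphic both to `Eᵢ` and to some `Eⱼ` with `j ≠ i`.

By dévissage along a composition series, `Ext¹(E_k, E_j) = 0` for `j ≠ k` gives
`Ext¹(E_k, V) = 0` for every finite length `V` without `E_k` among its factors. If
`N = ⨆ Mᵢ` were proper, take `L` covering `N`, so `L / N ≅ E_k` for some `k`. Splitting the
extension `0 → N / M_k → L / M_k → E_k → 0` gives `W` with `W ⊓ N = M_k` and `W ⊔ N = L`.
Then `W` is an extension of `E_k` by `M_k`, hence `E_k`-isotypic, so `W ≤ M_k ≤ N` and `L = N`.
-/

universe u v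

/-- A submodule `N` of `M` is `E`-isotypic if every simple subquotient of `N`
(equivalently, every composition factor of `N`) is isomorphic to `E`. -/
def IsIsotypicOf (R : Type u) [Ring R] {M : Type v} [AddCommGroup M] [Module R M]
    (E : Type v) [AddCommGroup E] [Module R E] (N : Submodule R M) : Prop :=
  ∀ A B : Submodule R M, A ≤ B → B ≤ N →
    IsSimpleModule R (↥B ⧸ (A.comap B.subtype)) →
      Nonempty ((↥B ⧸ (A.comap B.subtype)) ≃ₗ[R] E)

def IsIsoInvariant (R : Type u) [Ring R]
    (P : ∀ (X : Type v) [AddCommGroup X] [Module R X], Prop) : Prop :=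
  ∀ ⦃X Y : Type v⦄ [AddCommGroup X] [Module R X] [AddCommGroup Y] [Module R Y],
    (X ≃ₗ[R] Y) → P X → P Y

/-- `Ext¹_R(F, G) = 0`. -/
def ExtensionsSplit (R : Type u) [Ring R] (F G : Type v) [AddCommGroup F] [Module R F]
    [AddCommGroup G] [Module R G] : Prop :=
  ∀ (X : Type v) [AddCommGroup X] [Module R X] (f : G →ₗ[R] X) (g : X →ₗ[R] F),
    Function.Injective f → Function.Surjective g → LinearMap.range f = LinearMap.ker g →
      ∃ sec : F →ₗ[R] X, g.comp sec = LinearMap.id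

section CompositionFactors

variable {R : Type u} [Ring R] {M : Type v} [AddCommGroup M] [Module R M]

abbrev Subquotient (A B : Submodule R M) : Type v := ↥B ⧸ A.comap B.subtype

def FactorsSatisfy (P : ∀ (X : Type v) [AddCommGroup X] [Module R X], Prop)
    (A B : Submodule R M) : Prop :=
  ∀ A' B' : Submodule R M, A ≤ A' → A' ≤ B' → B' ≤ B →
    IsSimpleModule R (Subquotient A' B') → P (Subquotient A' B')

theorem nonempty_subquotient_equiv {p q A B : Submodule R M} (hA : p ⊓ q = A)
    (hB : p ⊔ q = B) : Nonempty (Subquotient A p ≃ₗ[R] Subquotient q B) := by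
  subst hA hB
  exact ⟨LinearMap.quotientInfEquivSupQuotient p q⟩

variable {P P' : ∀ (X : Type v) [AddCommGroup X] [Module R X], Prop}

theorem FactorsSatisfy.mono {A B A' B' : Submodule R M} (h : FactorsSatisfy P A B)
    (hA : A ≤ A') (hB : B' ≤ B) : FactorsSatisfy P A' B' :=
  fun C D hC hCD hD => h C D (hA.trans hC) hCD (hD.trans hB)

theorem FactorsSatisfy.imp {A B : Submodule R M} (h : FactorsSatisfy P A B)
    (hPP' : ∀ (X : Type v) [AddCommGroup X] [Module R X], P X → P' X) :
    FactorsSatisfy P' A B :=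
  fun C D hC hCD hD hs => hPP' _ (h C D hC hCD hD hs)

theorem factorsSatisfy_self (A : Submodule R M) : FactorsSatisfy P A A :=
  fun _ _ hC hCD hD hs =>
    absurd ((covBy_iff_quot_is_simple hCD).mpr hs).lt (not_lt_of_ge (hD.trans hC))

theorem factorsSatisfy_of_covBy {A B : Submodule R M} (h : A ⋖ B) (hP : P (Subquotient A B)) :
    FactorsSatisfy P A B := by
  intro C D hC hCD hD hs
  have hCD' : C < D := ((covBy_iff_quot_is_simple hCD).mpr hs).lt
  obtain rfl : C = A := (h.wcovBy.eq_or_eq hC (hCD.trans hD)).resolve_right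
    fun hCB => hCD'.not_ge (hCB ▸ hD)
  obtain rfl : D = B := (h.wcovBy.eq_or_eq (hC.trans hCD) hD).resolve_left
    fun hDA => hCD'.not_ge (hDA ▸ hC)
  exact hP

theorem FactorsSatisfy.trans (hP : IsIsoInvariant R P) {A B C : Submodule R M} (hAB : A ≤ B)
    (hBC : B ≤ C) (h₁ : FactorsSatisfy P A B) (h₂ : FactorsSatisfy P B C) :
    FactorsSatisfy P A C := by
  intro D' D hD' hD'D hD hs
  have hcov : D' ⋖ D := (covBy_iff_quot_is_simple hD'D).mpr hs
  -- `D / D'` is a factor of `C / B` if `D ⊓ B ≤ D'`, and of `B / A` otherwise.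
  rcases hcov.wcovBy.eq_or_eq (le_sup_left : D' ≤ D' ⊔ D ⊓ B)
      (sup_le hD'D inf_le_left) with hm | hm
  · obtain ⟨e⟩ := nonempty_subquotient_equiv (p := D) (q := D' ⊔ B)
      (by rw [inf_comm, sup_inf_assoc_of_le B hD'D, inf_comm, hm])
      (by rw [← sup_assoc, sup_of_le_left hD'D])
    exact hP e.symm (h₂ _ _ le_sup_right (sup_le_sup_right hD'D B) (sup_le hD hBC)
      (IsSimpleModule.congr e.symm))
  · obtain ⟨e⟩ := nonempty_subquotient_equiv (p := D ⊓ B) (q := D') rfl (by rw [sup_comm, hm])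
    exact hP e (h₁ _ _ (le_inf (le_inf (hD'.trans hD'D) hAB) hD') inf_le_left inf_le_right
      (IsSimpleModule.congr e))

theorem FactorsSatisfy.sup_of_inf (hP : IsIsoInvariant R P) {N N' : Submodule R M}
    (h : FactorsSatisfy P (N ⊓ N') N') : FactorsSatisfy P N (N ⊔ N') := by
  intro A B hA hAB hB hs
  have hsup : B ⊓ N' ⊔ A = B := by
    rw [sup_comm, inf_comm B, ← sup_inf_assoc_of_le N' hAB]
    exact inf_eq_right.mpr (hB.trans (sup_le_sup_right hA N'))
  obtain ⟨e⟩ := nonempty_subquotient_equiv (p := B ⊓ N') (q := A)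
    (A := A ⊓ N') (by rw [inf_right_comm, inf_eq_right.mpr hAB]) hsup
  exact hP e (h _ _ (inf_le_inf_right N' hA) (inf_le_inf_right N' hAB) inf_le_right
    (IsSimpleModule.congr e))

theorem FactorsSatisfy.bot_sup (hP : IsIsoInvariant R P) {N N' : Submodule R M}
    (h : FactorsSatisfy P ⊥ N) (h' : FactorsSatisfy P ⊥ N') : FactorsSatisfy P ⊥ (N ⊔ N') :=
  h.trans hP bot_le le_sup_left ((h'.mono bot_le le_rfl).sup_of_inf hP)

theorem FactorsSatisfy.bot_sSup [IsNoetherian R M] (hP : IsIsoInvariant R P)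
    {S : Set (Submodule R M)} (h : ∀ N ∈ S, FactorsSatisfy P ⊥ N) :
    FactorsSatisfy P ⊥ (sSup S) := by
  obtain ⟨t, htS, hSt⟩ := CompleteLattice.WellFoundedGT.isSupFiniteCompact _ S
  rw [hSt]
  exact Finset.sup_induction (factorsSatisfy_self ⊥) (fun _ h₁ _ h₂ => h₁.bot_sup hP h₂)
    fun N hN => h N (htS hN)

theorem FactorsSatisfy.bot_iSup [IsNoetherian R M] (hP : IsIsoInvariant R P) {ι : Sort*}
    {N : ι → Submodule R M} (h : ∀ i, FactorsSatisfy P ⊥ (N i)) :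
    FactorsSatisfy P ⊥ (⨆ i, N i) :=
  FactorsSatisfy.bot_sSup hP (Set.forall_mem_range.mpr h)

theorem isIsoInvariant_nonempty_equiv (E : Type v) [AddCommGroup E] [Module R E] :
    IsIsoInvariant R (fun X _ _ => Nonempty (X ≃ₗ[R] E)) :=
  fun _ _ _ _ _ _ e ⟨e'⟩ => ⟨e.symm.trans e'⟩

theorem isIsoInvariant_exists_nonempty_equiv {ι : Type*} (E : ι → Type v)
    [∀ i, AddCommGroup (E i)] [∀ i, Module R (E i)] (p : ι → Prop) :
    IsIsoInvariant R (fun X _ _ => ∃ i, p i ∧ Nonempty (X ≃ₗ[R] E i)) :=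
  fun _ _ _ _ _ _ e ⟨i, hi, ⟨e'⟩⟩ => ⟨i, hi, ⟨e.symm.trans e'⟩⟩

theorem isIsotypicOf_iff {E : Type v} [AddCommGroup E] [Module R E] {N : Submodule R M} :
    IsIsotypicOf R E N ↔ FactorsSatisfy (fun X _ _ => Nonempty (X ≃ₗ[R] E)) ⊥ N :=
  ⟨fun h A B _ hAB hB => h A B hAB hB, fun h A B hAB hB => h A B bot_le hAB hB⟩

theorem isIsotypicOf_sSup [IsNoetherian R M] {E : Type v} [AddCommGroup E] [Module R E] :
    IsIsotypicOf R E (sSup {N : Submodule R M | IsIsotypicOf R E N}) :=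
  isIsotypicOf_iff.mpr <| FactorsSatisfy.bot_sSup (isIsoInvariant_nonempty_equiv E)
    fun _ hN => isIsotypicOf_iff.mp hN

variable {ι : Type*} {E : ι → Type v} [∀ i, AddCommGroup (E i)] [∀ i, Module R (E i)]

theorem factorsSatisfy_iSup_ne [IsNoetherian R M] {N : ι → Submodule R M}
    (hN : ∀ i, IsIsotypicOf R (E i) (N i)) (k : ι) :
    FactorsSatisfy (fun X _ _ => ∃ j ≠ k, Nonempty (X ≃ₗ[R] E j)) ⊥
      (⨆ (j) (_ : j ≠ k), N j) :=
  FactorsSatisfy.bot_iSup (isIsoInvariant_exists_nonempty_equiv E _) fun j =>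
    FactorsSatisfy.bot_iSup (isIsoInvariant_exists_nonempty_equiv E _) fun hj =>
      (isIsotypicOf_iff.mp (hN j)).imp fun _ _ _ h => ⟨j, hj, h⟩

theorem iSupIndep_of_isIsotypicOf [IsNoetherian R M] [IsArtinian R M]
    (hE : ∀ i j, i ≠ j → IsEmpty (E i ≃ₗ[R] E j)) {N : ι → Submodule R M}
    (hN : ∀ i, IsIsotypicOf R (E i) (N i)) : iSupIndep N := by
  intro i
  rw [disjoint_iff]
  by_contra hne
  obtain ⟨S, hS, hSle⟩ := (eq_bot_or_exists_atom_le _).resolve_left hne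
  have hs := (covBy_iff_quot_is_simple bot_le).mp (bot_covBy_iff.mpr hS)
  obtain ⟨e⟩ := hN i ⊥ S bot_le (hSle.trans inf_le_left) hs
  obtain ⟨j, hj, ⟨e'⟩⟩ :=
    factorsSatisfy_iSup_ne hN i ⊥ S le_rfl bot_le (hSle.trans inf_le_right) hs
  exact (hE i j hj.symm).false (e.symm.trans e')

theorem exists_inf_eq_sup_eq_of_extensionsSplit {F G : Type v} [AddCommGroup F] [Module R F]
    [AddCommGroup G] [Module R G] (hFG : ExtensionsSplit R F G) {A V X : Submodule R M}
    (hAV : A ≤ V) (hVX : V ≤ X) (eG : Subquotient A V ≃ₗ[R] G)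
    (eF : Subquotient V X ≃ₗ[R] F) : ∃ W, W ⊓ V = A ∧ W ⊔ V = X := by
  have hA : A.comap V.subtype ≤ (A.comap X.subtype).comap (Submodule.inclusion hVX) := by
    rw [← Submodule.comap_comp, Submodule.subtype_comp_inclusion]
  have hAV' : A.comap X.subtype ≤ V.comap X.subtype := Submodule.comap_mono hAV
  have hf : Function.Injective ((A.comap V.subtype).mapQ _ _ hA) := by
    rw [← LinearMap.ker_eq_bot, Submodule.ker_mapQ]
    exact Submodule.mkQ_map_self _
  have hfg : LinearMap.range ((A.comap V.subtype).mapQ _ _ hA) =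
      LinearMap.ker (Submodule.factor hAV') := by
    rw [Submodule.range_mapQ, Submodule.range_inclusion, Submodule.ker_mapQ, Submodule.comap_id]
  obtain ⟨sec, hsec⟩ := hFG _ (_ ∘ₗ eG.symm.toLinearMap) (eF.toLinearMap ∘ₗ _)
    (hf.comp eG.symm.injective) (eF.surjective.comp (Submodule.factor_surjective hAV'))
    (by rw [LinearMap.range_comp_of_range_eq_top _ eG.symm.range, hfg, LinearEquiv.ker_comp])
  have hsec' : ∀ t, eF (Submodule.factor hAV' (sec t)) = t := LinearMap.congr_fun hsec
  refine ⟨((LinearMap.range sec).comap (A.comap X.subtype).mkQ).map X.subtype,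
    le_antisymm ?_ (le_inf ?_ hAV), le_antisymm (sup_le (Submodule.map_subtype_le _ _) hVX) ?_⟩
  · rintro _ ⟨⟨y, ⟨t, ht⟩, rfl⟩, hyV⟩
    have ht0 : t = 0 := by
      rw [← hsec' t, ht]
      simpa using hyV
    rw [ht0, map_zero, eq_comm, Submodule.mkQ_apply, Submodule.Quotient.mk_eq_zero] at ht
    exact ht
  · intro x hx
    refine ⟨⟨x, hAV.trans hVX hx⟩, ⟨0, ?_⟩, rfl⟩
    rw [map_zero, Submodule.mkQ_apply, eq_comm, Submodule.Quotient.mk_eq_zero]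
    exact hx
  · intro x hx
    set y : X := ⟨x, hx⟩
    obtain ⟨z, hz⟩ := Submodule.mkQ_surjective _
      (sec (eF (Submodule.factor hAV' (Submodule.mkQ _ y))))
    refine Submodule.mem_sup.mpr
      ⟨z, ⟨z, ⟨_, hz.symm⟩, rfl⟩, ((y - z : X) : M), ?_, by simp [y]⟩
    suffices h : Submodule.factor hAV' (Submodule.mkQ _ (y - z)) = 0 by
      rwa [Submodule.factor_mk, Submodule.mkQ_apply, Submodule.Quotient.mk_eq_zero] at h
    apply eF.injective
    rw [map_sub, map_sub, hz, map_sub, hsec', sub_self, map_zero]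

theorem exists_inf_eq_sup_eq_of_factorsSatisfy [IsNoetherian R M] [IsArtinian R M]
    {P Q : ∀ (X : Type v) [AddCommGroup X] [Module R X], Prop} (hP : IsIsoInvariant R P)
    (hsplit : ∀ A V X : Submodule R M, A ≤ V → V ≤ X → Q (Subquotient A V) →
      P (Subquotient V X) → ∃ W, W ⊓ V = A ∧ W ⊔ V = X)
    {A V X : Submodule R M} (hAV : A ≤ V) (hVX : V ≤ X) (hQ : FactorsSatisfy Q A V)
    (hX : P (Subquotient V X)) : ∃ W, W ⊓ V = A ∧ W ⊔ V = X := by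
  induction V using WellFoundedLT.induction generalizing X with
  | _ V ih =>
  rcases hAV.eq_or_lt with rfl | hlt
  · exact ⟨X, inf_eq_right.mpr hVX, sup_eq_left.mpr hVX⟩
  -- Split off the top factor `V / V₁` first, then recurse on `V₁` inside the complement `W₁`.
  obtain ⟨V₁, hAV₁, hV₁V⟩ := exists_le_covBy_of_lt hlt
  obtain ⟨W₁, hW₁V, hW₁X⟩ := hsplit V₁ V X hV₁V.le hVX
    (hQ V₁ V hAV₁ hV₁V.le le_rfl ((covBy_iff_quot_is_simple hV₁V.le).mp hV₁V)) hX
  obtain ⟨e⟩ := nonempty_subquotient_equiv hW₁V hW₁X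
  obtain ⟨W, hWV₁, hWW₁⟩ := ih V₁ hV₁V.lt hAV₁ (hW₁V ▸ inf_le_left)
    (hQ.mono le_rfl hV₁V.le) (hP e.symm hX)
  refine ⟨W, ?_, ?_⟩
  · rw [← inf_eq_left.mpr (le_sup_left.trans hWW₁.le : W ≤ W₁), inf_assoc, hW₁V, hWV₁]
  · rw [← hW₁X, ← hWW₁, sup_assoc, sup_of_le_right hV₁V.le]

theorem iSup_sSup_isIsotypicOf_eq_top [IsNoetherian R M] [IsArtinian R M]
    (hexhaust : ∀ A B : Submodule R M, A ≤ B → IsSimpleModule R (Subquotient A B) →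
      ∃ i, Nonempty (Subquotient A B ≃ₗ[R] E i))
    (hext : ∀ i j, i ≠ j → ExtensionsSplit R (E i) (E j)) :
    ⨆ i, sSup {N : Submodule R M | IsIsotypicOf R (E i) N} = ⊤ := by
  set C := fun i => sSup {N : Submodule R M | IsIsotypicOf R (E i) N}
  by_contra hne
  obtain ⟨L, hNL, -⟩ := exists_covBy_le_of_lt (lt_top_iff_ne_top.mpr hne)
  obtain ⟨k, ⟨eL⟩⟩ := hexhaust _ L hNL.le ((covBy_iff_quot_is_simple hNL.le).mp hNL)
  have hQ : FactorsSatisfy (fun X _ _ => ∃ j ≠ k, Nonempty (X ≃ₗ[R] E j)) (C k) (⨆ i, C i) := by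
    rw [iSup_split_single C k]
    exact ((factorsSatisfy_iSup_ne (fun i => isIsotypicOf_sSup) k).mono bot_le le_rfl).sup_of_inf
      (isIsoInvariant_exists_nonempty_equiv E _)
  obtain ⟨W, hWN, hWL⟩ := exists_inf_eq_sup_eq_of_factorsSatisfy
    (isIsoInvariant_nonempty_equiv (E k))
    (fun A V X hAV hVX ⟨j, hj, ⟨eA⟩⟩ ⟨eX⟩ =>
      exists_inf_eq_sup_eq_of_extensionsSplit (hext k j hj.symm) hAV hVX eA eX)
    (le_iSup C k) hNL.le hQ ⟨eL⟩
  have hcov : C k ⋖ W := by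
    rw [← hWN, inf_comm]
    exact inf_covBy_of_covBy_sup_left (by rwa [sup_comm, hWL])
  obtain ⟨eW⟩ := nonempty_subquotient_equiv hWN hWL
  have hW : IsIsotypicOf R (E k) W := isIsotypicOf_iff.mpr <|
    (isIsotypicOf_iff.mp isIsotypicOf_sSup).trans (isIsoInvariant_nonempty_equiv (E k)) bot_le
      hcov.le (factorsSatisfy_of_covBy hcov ⟨eW.trans eL⟩)
  exact hNL.lt.not_ge (hWL ▸ sup_le ((le_sSup hW).trans (le_iSup C k)) le_rfl)

end CompositionFactors

theorem isotypic_decomposition_of_ext_vanishing_general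
    (R : Type u) [Ring R] (M : Type v) [AddCommGroup M] [Module R M]
    (hlen : IsFiniteLength R M)
    (s : ℕ) (E : Fin s → Type v) [∀ i, AddCommGroup (E i)] [∀ i, Module R (E i)]
    (hpairwise : ∀ i j, i ≠ j → IsEmpty (E i ≃ₗ[R] E j))
    -- every composition factor of `M` is isomorphic to some `E i`:
    (hexhaust : ∀ A B : Submodule R M, A ≤ B →
      IsSimpleModule R (↥B ⧸ (A.comap B.subtype)) →
        ∃ i, Nonempty ((↥B ⧸ (A.comap B.subtype)) ≃ₗ[R] E i))
    -- `Ext¹_R(E i, E j) = 0` for `i ≠ j`: every extension of `E i` by `E j` splits: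
    (hext : ∀ i j, i ≠ j → ∀ (X : Type v) [AddCommGroup X] [Module R X]
      (f : E j →ₗ[R] X) (g : X →ₗ[R] E i),
        Function.Injective f → Function.Surjective g →
        LinearMap.range f = LinearMap.ker g →
          ∃ sec : E i →ₗ[R] X, g.comp sec = LinearMap.id) :
    DirectSum.IsInternal
      (fun i : Fin s => sSup {N : Submodule R M | IsIsotypicOf R (E i) N}) := by
  obtain ⟨_, _⟩ := isFiniteLength_iff_isNoetherian_isArtinian.mp hlen
  exact DirectSum.isInternal_submodule_of_iSupIndep_of_iSup_eq_top
    (iSupIndep_of_isIsotypicOf hpairwise fun _ => isIsotypicOf_sSup)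
    (iSup_sSup_isIsotypicOf_eq_top hexhaust hext)

/-- Let `M` be a finite length module over a ring `R` and let
`E 0, …, E (s-1)` be representatives of the isomorphism classes of the simple composition
factors of `M`.  Let `Mᵢ` be the maximal submodule of `M` all of whose composition factors
are isomorphic to `E i` (the sup of all `E i`-isotypic submodules).  If
`Ext¹_R(E i, E j) = 0` for `i ≠ j` (i.e. every extension of `E i` by `E j` splits),
then `M` is the internal direct sum of its isotypic components `M = M₁ ⊕ ⋯ ⊕ M_s`. -/
theorem isotypic_decomposition_of_ext_vanishing
    (R : Type u) [Ring R] (M : Type v) [AddCommGroup M] [Module R M]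
    (hlen : IsFiniteLength R M)
    (s : ℕ) (E : Fin s → Type v) [∀ i, AddCommGroup (E i)] [∀ i, Module R (E i)]
    (hsimple : ∀ i, IsSimpleModule R (E i))
    (hpairwise : ∀ i j, i ≠ j → IsEmpty (E i ≃ₗ[R] E j))
    -- every composition factor of `M` is isomorphic to some `E i`:
    (hexhaust : ∀ A B : Submodule R M, A ≤ B →
      IsSimpleModule R (↥B ⧸ (A.comap B.subtype)) →
        ∃ i, Nonempty ((↥B ⧸ (A.comap B.subtype)) ≃ₗ[R] E i))
    -- `Ext¹_R(E i, E j) = 0` for `i ≠ j`: every extension of `E i` by `E j` splits: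
    (hext : ∀ i j, i ≠ j → ∀ (X : Type v) [AddCommGroup X] [Module R X]
      (f : E j →ₗ[R] X) (g : X →ₗ[R] E i),
        Function.Injective f → Function.Surjective g →
        LinearMap.range f = LinearMap.ker g →
          ∃ sec : E i →ₗ[R] X, g.comp sec = LinearMap.id) :
    DirectSum.IsInternal
      (fun i : Fin s => sSup {N : Submodule R M | IsIsotypicOf R (E i) N}) :=
  isotypic_decomposition_of_ext_vanishing_general R M hlen s E hpairwise hexhaust hext
end

section
/- Let A be an abelian variety over ℚ_N with semistable reduction, p a prime different from N, T_p(A) its p-adic Tate module, σ a topological generator of the (pro-p cyclic) inertia image, and suppose (σ−1)²(T_p(A)) = 0. Let M_t be a ℤ_p-direct summand of T_p(A) containing (σ−1)(T_p(A)) with finite index, and suppose the conductor exponents satisfy length_{ℤ_p}((σ−1)(A[p])) = rank_{ℤ_p} M_t. Then length_{ℤ_p}((σ−1)(A[pⁿ])) = n · length_{ℤ_p}((σ−1)(A[p])) for all n ≥ 1, and (σ−1)(T_p(A)) = M_t. -/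
/-!
Because `M_t` is a direct summand, `(σ−1)T ∩ pT ⊆ M_t ∩ pT = p M_t`, so `(σ−1)(A[p])` embeds
into `M_t / p M_t`, of order `p ^ rank M_t`. The conductor hypothesis makes this embedding
onto, i.e. `M_t = (σ−1)T + p M_t`, and Nakayama's lemma gives `(σ−1)T = M_t`. Then
`(σ−1)(A[pⁿ]) ≅ M_t / pⁿ M_t` has order `p ^ (n · rank M_t)`.
-/

open Pointwise

namespace Submodule

variable {R M : Type*} [CommRing R] [AddCommGroup M] [Module R M]

theorem natCard_quotient_ideal_smul_top [StrongRankCondition R] [Module.Free R M]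
    [Module.Finite R M] (I : Ideal R) :
    Nat.card (M ⧸ I • (⊤ : Submodule R M)) = Nat.card (R ⧸ I) ^ Module.finrank R M := by
  let b := Module.Free.chooseBasis R M
  rw [← Nat.card_congr (TensorProduct.quotTensorEquivQuotSMul M I).toEquiv,
    Nat.card_congr (Algebra.TensorProduct.basis (R ⧸ I) b).equivFun.toEquiv, Nat.card_fun,
    ← Module.finrank_eq_nat_card_basis b]

theorem comap_subtype_ideal_smul_top_of_isCompl {N C : Submodule R M} (h : IsCompl N C)
    (I : Ideal R) : (I • ⊤ : Submodule R M).comap N.subtype = I • ⊤ := by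
  refine le_antisymm ?_ ?_
  · calc (I • ⊤ : Submodule R M).comap N.subtype
        = ((I • ⊤ : Submodule R M).comap N.subtype).map (N.projectionOnto C h ∘ₗ N.subtype) := by
          rw [projectionOnto_comp_subtype, map_id]
      _ ≤ (I • ⊤ : Submodule R M).map (N.projectionOnto C h) := by
          rw [map_comp]
          exact map_mono (map_comap_le _ _)
      _ ≤ I • ⊤ := by
          rw [map_smul'']
          exact smul_mono_right _ le_top
  · rw [← map_le_iff_le_comap, map_smul'']
    exact smul_mono_right _ le_top

theorem inf_ideal_smul_top_of_isCompl {N C : Submodule R M} (h : IsCompl N C) (I : Ideal R) :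
    N ⊓ I • ⊤ = I • N := by
  rw [← map_comap_subtype, comap_subtype_ideal_smul_top_of_isCompl h, map_smul'', map_top,
    range_subtype]

noncomputable def quotientComapSubtypeEquivMapMkQ (N P : Submodule R M) :
    (N ⧸ P.comap N.subtype) ≃ₗ[R] N.map P.mkQ :=
  have hker : LinearMap.ker (P.mkQ ∘ₗ N.subtype) = P.comap N.subtype := by
    rw [LinearMap.ker_comp, ker_mkQ]
  have hrange : LinearMap.range (P.mkQ ∘ₗ N.subtype) = N.map P.mkQ := by
    rw [LinearMap.range_comp, range_subtype]
  (quotEquivOfEq _ _ hker.symm).trans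
    ((LinearMap.quotKerEquivRange _).trans (LinearEquiv.ofEq _ _ hrange))

theorem le_sup_of_natCard_quotient_comap_eq {N M' P : Submodule R M} (hNM : N ≤ M')
    [Finite (M' ⧸ P.comap M'.subtype)]
    (hcard : Nat.card (N ⧸ P.comap N.subtype) = Nat.card (M' ⧸ P.comap M'.subtype)) :
    M' ≤ N ⊔ P := by
  have : Finite (M'.map P.mkQ) := .of_equiv _ (quotientComapSubtypeEquivMapMkQ M' P).toEquiv
  rw [Nat.card_congr (quotientComapSubtypeEquivMapMkQ N P).toEquiv,
    Nat.card_congr (quotientComapSubtypeEquivMapMkQ M' P).toEquiv] at hcard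
  have hmap : N.map P.mkQ = M'.map P.mkQ :=
    SetLike.coe_injective (Set.eq_of_subset_of_ncard_le (map_mono hNM) hcard.ge (Set.toFinite _))
  calc M' ≤ P ⊔ M' := le_sup_right
    _ = P ⊔ N := by rw [← comap_map_mkQ, ← hmap, comap_map_mkQ]
    _ = N ⊔ P := sup_comm _ _

theorem eq_of_le_of_natCard_quotient_eq {N M' C : Submodule R M} (hNM : N ≤ M')
    (hM : IsCompl M' C) (hfg : M'.FG) {I : Ideal R} (hI : I ≤ Ideal.jacobson ⊥)
    [Finite (M' ⧸ (I • ⊤ : Submodule R M'))]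
    (hcard : Nat.card (N ⧸ (I • ⊤ : Submodule R M).comap N.subtype)
      = Nat.card (M' ⧸ (I • ⊤ : Submodule R M'))) :
    N = M' := by
  rw [← comap_subtype_ideal_smul_top_of_isCompl hM] at hcard
  have : Finite (M' ⧸ (I • ⊤ : Submodule R M).comap M'.subtype) := by
    rwa [comap_subtype_ideal_smul_top_of_isCompl hM]
  refine le_antisymm hNM (le_of_le_smul_of_le_jacobson_bot hfg hI ?_)
  calc M' ≤ (N ⊔ I • ⊤) ⊓ M' := le_inf (le_sup_of_natCard_quotient_comap_eq hNM hcard) le_rfl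
    _ = N ⊔ (I • ⊤) ⊓ M' := sup_inf_assoc_of_le _ hNM
    _ = N ⊔ I • M' := by rw [inf_comm, inf_ideal_smul_top_of_isCompl hM]

end Submodule

namespace PadicInt

variable {p : ℕ} [Fact p.Prime]

theorem natCard_quotient_span_pow (n : ℕ) :
    Nat.card (ℤ_[p] ⧸ Ideal.span {(p : ℤ_[p]) ^ n}) = p ^ n := by
  rw [← ker_toZModPow, Nat.card_congr
    (RingHom.quotientKerEquivOfSurjective (ZMod.ringHom_surjective _)).toEquiv, Nat.card_zmod]

theorem natCard_quotient_span_pow_smul_top {M : Type*} [AddCommGroup M] [Module ℤ_[p] M]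
    [Module.Free ℤ_[p] M] [Module.Finite ℤ_[p] M] (n : ℕ) :
    Nat.card (M ⧸ (Ideal.span {(p : ℤ_[p]) ^ n} • ⊤ : Submodule ℤ_[p] M))
      = (p ^ n) ^ Module.finrank ℤ_[p] M := by
  rw [Submodule.natCard_quotient_ideal_smul_top, natCard_quotient_span_pow]

theorem span_p_le_jacobson_bot : Ideal.span {(p : ℤ_[p])} ≤ Ideal.jacobson ⊥ := by
  rw [← maximalIdeal_eq_span_p, IsLocalRing.jacobson_eq_maximalIdeal ⊥ bot_ne_top]

end PadicInt

theorem tate_module_conductor_stability_general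
    {p : ℕ} [Fact p.Prime]
    {T : Type*} [AddCommGroup T] [Module ℤ_[p] T]
    [Module.Free ℤ_[p] T] [Module.Finite ℤ_[p] T]
    (f : T →ₗ[ℤ_[p]] T)
    (Mt : Submodule ℤ_[p] T)
    (hsumm : ∃ C : Submodule ℤ_[p] T, IsCompl Mt C)
    (hsub : LinearMap.range f ≤ Mt)
    (hcond : Nat.card
        (↥(LinearMap.range f) ⧸
          (((p : ℤ_[p]) ^ 1 • (⊤ : Submodule ℤ_[p] T)).comap (LinearMap.range f).subtype))
      = p ^ Module.finrank ℤ_[p] ↥Mt) :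
    (∀ n : ℕ, 1 ≤ n →
      Nat.card
          (↥(LinearMap.range f) ⧸
            (((p : ℤ_[p]) ^ n • (⊤ : Submodule ℤ_[p] T)).comap (LinearMap.range f).subtype))
        = (Nat.card
            (↥(LinearMap.range f) ⧸
              (((p : ℤ_[p]) ^ 1 • (⊤ : Submodule ℤ_[p] T)).comap
                (LinearMap.range f).subtype))) ^ n) ∧
    LinearMap.range f = Mt := by
  obtain ⟨C, hC⟩ := hsumm
  simp only [← Submodule.ideal_span_singleton_smul, pow_one] at hcond ⊢
  have hcardMt := PadicInt.natCard_quotient_span_pow_smul_top (p := p) (M := Mt) 1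
  simp only [pow_one] at hcardMt
  have : Finite (Mt ⧸ (Ideal.span {(p : ℤ_[p])} • ⊤ : Submodule ℤ_[p] Mt)) :=
    Nat.finite_of_card_ne_zero (by
      rw [hcardMt]
      exact pow_ne_zero _ (Fact.out : p.Prime).ne_zero)
  have hrange : LinearMap.range f = Mt :=
    Submodule.eq_of_le_of_natCard_quotient_eq hsub hC (IsNoetherian.noetherian Mt)
      PadicInt.span_p_le_jacobson_bot (hcond.trans hcardMt.symm)
  subst hrange
  refine ⟨fun n _ => ?_, rfl⟩
  rw [Submodule.comap_subtype_ideal_smul_top_of_isCompl hC,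
    Submodule.comap_subtype_ideal_smul_top_of_isCompl hC,
    PadicInt.natCard_quotient_span_pow_smul_top, hcardMt, ← pow_mul, ← pow_mul, mul_comm]

/-- Let `T = T_p(A)` be the `p`-adic Tate module of a semistable
abelian variety over `ℚ_N` (`p ≠ N`): a finite free `ℤ_p`-module with an automorphism
`σ` (a topological generator of the inertia image) satisfying `(σ−1)² = 0`.  Let `M_t`
(the toric space) be a `ℤ_p`-direct summand of `T` containing `(σ−1)T` with finite
index, and suppose `length_{ℤ_p}((σ−1)(A[p])) = rank_{ℤ_p} M_t`, where
`A[pⁿ] = T/pⁿT` and lengths of finite `ℤ_p`-modules `W` are recorded via their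
cardinalities `|W| = p^{length W}`.  Then
`length_{ℤ_p}((σ−1)(A[pⁿ])) = n · length_{ℤ_p}((σ−1)(A[p]))` for all `n ≥ 1`, and
`(σ−1)(T) = M_t`.  (Here `(σ−1)(A[pⁿ]) ≅ (σ−1)T / ((σ−1)T ∩ pⁿT)`.) -/
theorem tate_module_conductor_stability
    {p : ℕ} [Fact p.Prime]
    {T : Type*} [AddCommGroup T] [Module ℤ_[p] T]
    [Module.Free ℤ_[p] T] [Module.Finite ℤ_[p] T]
    (σ : T ≃ₗ[ℤ_[p]] T)
    (f : T →ₗ[ℤ_[p]] T) (hf : f = σ.toLinearMap - LinearMap.id)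
    (hf2 : ∀ x : T, f (f x) = 0)
    (Mt : Submodule ℤ_[p] T)
    (hsumm : ∃ C : Submodule ℤ_[p] T, IsCompl Mt C)
    (hsub : LinearMap.range f ≤ Mt)
    (hfinidx : Finite (↥Mt ⧸ ((LinearMap.range f).comap Mt.subtype)))
    (hcond : Nat.card
        (↥(LinearMap.range f) ⧸
          (((p : ℤ_[p]) ^ 1 • (⊤ : Submodule ℤ_[p] T)).comap (LinearMap.range f).subtype))
      = p ^ Module.finrank ℤ_[p] ↥Mt) :
    (∀ n : ℕ, 1 ≤ n →
      Nat.card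
          (↥(LinearMap.range f) ⧸
            (((p : ℤ_[p]) ^ n • (⊤ : Submodule ℤ_[p] T)).comap (LinearMap.range f).subtype))
        = (Nat.card
            (↥(LinearMap.range f) ⧸
              (((p : ℤ_[p]) ^ 1 • (⊤ : Submodule ℤ_[p] T)).comap
                (LinearMap.range f).subtype))) ^ n) ∧
    LinearMap.range f = Mt :=
  tate_module_conductor_stability_general f Mt hsumm hsub hcond
end

section
/- Let Δ be the Frobenius group of order 20, presented as Δ = ⟨σ, τ | σ⁵ = τ⁴ = 1, τστ⁻¹ = σ²⟩, acting on the 4-dimensional 𝔽₂-vector space E = 𝔽₁₆ where σ acts as multiplication by a fixed primitive 5th root of unity ζ ∈ 𝔽₁₆^× and τ acts as the Frobenius x ↦ x². Then with 𝔥 = End_{𝔽₂}(E), the subspace 𝔥₀ of elements commuting with the action of σ equals 𝔽₂[s] ≅ 𝔽₁₆ where s is the action of σ, and H¹(Δ, 𝔥) = 0. -/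
/-!
Since `2` has order `4` modulo `5`, a primitive fifth root of unity `ζ` generates `𝔽₁₆` over `𝔽₂`.
Hence an `𝔽₂`-linear endomorphism commuting with multiplication by `ζ` is `𝔽₁₆`-linear, i.e. a
multiplication operator, and these are exactly the polynomials in `s`.

For `H¹`: as `5` is invertible in `𝔽₂`, a cocycle is a coboundary on `⟨σ⟩`; after subtracting it,
the cocycle vanishes at `σ`, and `τστ⁻¹ = σ²` forces its value at `τ` to commute with `σ²`, hence
with `σ = (σ²)³`, so it is multiplication by some `a`. The cocycle relation for `τ⁴ = 1` says that
`Tr(a) = 0`, so additive Hilbert 90 gives `b` with `b² - b = a`, and the cocycle is the coboundary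
of multiplication by `b` on the generators `σ, τ`, hence everywhere.
-/

open Module Polynomial IntermediateField Finset Representation

theorem IsPrimitiveRoot.adjoin_eq_top_of_finrank_le_orderOf {F K : Type*} [Field F] [Fintype F]
    [Field K] [Algebra F K] [FiniteDimensional F K] {ζ : K} {n : ℕ} [NeZero n]
    (hζ : IsPrimitiveRoot ζ n) (h : finrank F K ≤ orderOf (Fintype.card F : ZMod n)) :
    Algebra.adjoin F {ζ} = ⊤ := by
  rw [← adjoin_simple_eq_top_iff_of_isAlgebraic (Algebra.IsAlgebraic.isAlgebraic ζ)]
  have : Finite K := Module.finite_of_finite F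
  let _ : Fintype F⟮ζ⟯ := Fintype.ofFinite _
  have hfix : ζ ^ Fintype.card F ^ finrank F F⟮ζ⟯ = ζ := by
    have := FiniteField.pow_card (⟨ζ, mem_adjoin_simple_self F ζ⟩ : F⟮ζ⟯)
    rw [Module.card_eq_pow_finrank (K := F)] at this
    exact congrArg Subtype.val this
  have hle : 1 ≤ Fintype.card F ^ finrank F F⟮ζ⟯ := Nat.one_le_pow _ _ Fintype.card_pos
  have hζ0 : ζ ≠ 0 := hζ.ne_zero (NeZero.ne n)
  have hζ1 : ζ ^ (Fintype.card F ^ finrank F F⟮ζ⟯ - 1) = 1 := by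
    rw [pow_sub₀ _ hζ0 hle, hfix, pow_one, mul_inv_cancel₀ hζ0]
  have hq : (Fintype.card F : ZMod n) ^ finrank F F⟮ζ⟯ = 1 := by
    have := (ZMod.natCast_eq_zero_iff _ _).2 (hζ.dvd_of_pow_eq_one _ hζ1)
    rw [Nat.cast_sub hle, sub_eq_zero] at this
    exact_mod_cast this
  refine eq_of_le_of_finrank_le le_top ?_
  rw [finrank_top']
  exact h.trans (Nat.le_of_dvd finrank_pos (orderOf_dvd_of_pow_eq_one hq))

theorem GaloisField.adjoin_primitiveRoot_five_eq_top {ζ : GaloisField 2 4}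
    (hζ : IsPrimitiveRoot ζ 5) : Algebra.adjoin (ZMod 2) {ζ} = ⊤ := by
  refine hζ.adjoin_eq_top_of_finrank_le_orderOf ?_
  rw [GaloisField.finrank 2 (by norm_num), ZMod.card]
  exact ((orderOf_eq_iff (by norm_num)).2 ⟨by decide, by decide⟩).ge

section Commutant

variable {F K : Type*} [CommSemiring F] [CommSemiring K] [Algebra F K] {ζ : K}

theorem commute_lmul_iff_mem_range_lmul (hζ : Algebra.adjoin F {ζ} = ⊤) (f : Module.End F K) :
    Commute f (Algebra.lmul F K ζ) ↔ f ∈ (Algebra.lmul F K).range := by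
  constructor
  · intro hf
    have hle : Algebra.adjoin F {ζ} ≤
        (Subalgebra.centralizer F {f}).comap (Algebra.lmul F K) := by
      rw [Algebra.adjoin_le_iff, Set.singleton_subset_iff]
      simpa [Subalgebra.mem_centralizer_iff, Set.mem_centralizer_iff] using hf.eq
    refine ⟨f 1, LinearMap.ext fun x => ?_⟩
    have hx : f * Algebra.lmul F K x = Algebra.lmul F K x * f := by
      simpa [Subalgebra.mem_centralizer_iff, Set.mem_centralizer_iff] using
        hle (hζ ▸ Algebra.mem_top)
    simpa [mul_comm] using (LinearMap.congr_fun hx 1).symm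
  · rintro ⟨a, rfl⟩
    exact (Commute.all a ζ).map (Algebra.lmul F K)

theorem range_lmul_eq_range_aeval (hζ : Algebra.adjoin F {ζ} = ⊤) :
    (Algebra.lmul F K).range = (aeval (Algebra.lmul F K ζ)).range := by
  rw [← Algebra.adjoin_singleton_eq_range_aeval, ← Set.image_singleton, ← AlgHom.map_adjoin, hζ,
    Algebra.map_top]

end Commutant

theorem FiniteField.exists_pow_card_sub_self_eq_of_trace_eq_zero {K L : Type*} [Field K]
    [Fintype K] [Field L] [Finite L] [Algebra K L] {a : L} (ha : Algebra.trace K L a = 0) :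
    ∃ b : L, b ^ Fintype.card K - b = a := by
  set q := Fintype.card K
  let φ : L →+ L := (frobeniusAlgHom K L).toRingHom.toAddMonoidHom - AddMonoidHom.id L
  have hφ (b : L) : φ b = b ^ q - b := by simp [φ, q]
  let tr : L →+ K := (Algebra.trace K L).toAddMonoidHom
  have hrange : φ.range ≤ tr.ker := by
    rintro _ ⟨b, rfl⟩
    have := Algebra.trace_eq_of_algEquiv (frobeniusAlgEquivOfAlgebraic K L) b
    rw [AddMonoidHom.mem_ker, hφ]
    simpa [tr, sub_eq_zero] using this
  have hker : Nat.card φ.ker ≤ q := by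
    have hroots : (φ.ker : Set L) ⊆ (X ^ q - X : K[X]).rootSet L := fun b hb =>
      mem_rootSet.2 ⟨X_pow_card_sub_X_ne_zero K Fintype.one_lt_card, by simpa [hφ] using hb⟩
    calc Nat.card φ.ker = (φ.ker : Set L).ncard := Nat.card_coe_set_eq _
      _ ≤ ((X ^ q - X : K[X]).rootSet L).ncard := Set.ncard_le_ncard hroots
      _ ≤ q := (ncard_rootSet_le _ _).trans
        (X_pow_card_sub_X_natDegree_eq K Fintype.one_lt_card).le
  have hcard_tr : Nat.card tr.ker * q = Nat.card L := by
    rw [← tr.ker.card_mul_index, AddSubgroup.index_ker,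
      AddMonoidHom.range_eq_top.2 (Algebra.trace_surjective K L), AddSubgroup.card_top,
      Nat.card_eq_fintype_card (α := K)]
  have hcard_φ : Nat.card φ.ker * Nat.card φ.range = Nat.card L := by
    rw [← φ.ker.card_mul_index, AddSubgroup.index_ker]
  have heq : φ.range = tr.ker := by
    refine AddSubgroup.eq_of_le_of_card_ge hrange
      (Nat.le_of_mul_le_mul_right ?_ (Fintype.card_pos (α := K)))
    calc Nat.card tr.ker * q = Nat.card φ.ker * Nat.card φ.range := hcard_tr.trans hcard_φ.symm
      _ ≤ Nat.card φ.range * q := by rw [mul_comm]; exact Nat.mul_le_mul_left _ hker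
  obtain ⟨b, hb⟩ := heq ▸ (show a ∈ tr.ker from ha)
  exact ⟨b, (hφ b).symm.trans hb⟩

namespace Representation

section Cocycle

variable {k G M : Type*} [CommSemiring k] [Group G] [AddCommGroup M] [Module k M]

/- `groupCohomology.IsCocycle₁` is phrased with an instance `SMul G M`, which is not available for
actions such as `linHom ρ ρ`. -/
def IsCocycle₁ (σ : Representation k G M) (c : G → M) : Prop :=
  ∀ g h, c (g * h) = c g + σ g (c h)

variable {σ : Representation k G M} {c : G → M}

namespace IsCocycle₁

theorem map_one (hc : σ.IsCocycle₁ c) : c 1 = 0 := by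
  simpa using hc 1 1

theorem map_inv (hc : σ.IsCocycle₁ c) (g : G) : c g⁻¹ = -σ g⁻¹ (c g) := by
  rw [eq_neg_iff_add_eq_zero, ← hc, inv_mul_cancel, hc.map_one]

theorem map_pow (hc : σ.IsCocycle₁ c) (g : G) (n : ℕ) :
    c (g ^ n) = ∑ i ∈ range n, σ (g ^ i) (c g) := by
  induction n with
  | zero => simp [hc.map_one]
  | succ n ih => rw [pow_succ, hc, ih, sum_range_succ]

theorem sub_coboundary (hc : σ.IsCocycle₁ c) (m : M) :
    σ.IsCocycle₁ fun g => c g - (σ g m - m) := fun g h => by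
  simp only [hc g h, map_mul, Module.End.mul_apply, map_sub]
  abel

theorem eq_zero_of_closure (hc : σ.IsCocycle₁ c) {S : Set G} (hS : Subgroup.closure S = ⊤)
    (h0 : ∀ g ∈ S, c g = 0) (g : G) : c g = 0 := by
  have hg : g ∈ Subgroup.closure S := hS ▸ Subgroup.mem_top g
  induction hg using Subgroup.closure_induction with
  | mem g hg => exact h0 g hg
  | one => exact hc.map_one
  | mul g h _ _ hg hh => rw [hc, hg, hh, map_zero, add_zero]
  | inv g _ hg => rw [hc.map_inv, hg, map_zero, neg_zero]

theorem eq_coboundary_of_closure (hc : σ.IsCocycle₁ c) {S : Set G}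
    (hS : Subgroup.closure S = ⊤) {m : M} (hm : ∀ g ∈ S, c g = σ g m - m) (g : G) :
    c g = σ g m - m :=
  sub_eq_zero.1 <|
    (hc.sub_coboundary m).eq_zero_of_closure hS (fun g hg => sub_eq_zero.2 (hm g hg)) g

theorem exists_eq_coboundary_of_pow_eq_one (hc : σ.IsCocycle₁ c) {g : G} {n : ℕ}
    (hg : g ^ n = 1) (hn : IsUnit (n : k)) : ∃ m, c g = σ g m - m := by
  set S := ∑ i ∈ range n, c (g ^ i)
  have hshift : ∑ i ∈ range n, c (g ^ (i + 1)) = S := by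
    have := sum_range_succ' (fun i => c (g ^ i)) n
    rw [sum_range_succ, hg, pow_zero, hc.map_one] at this
    simpa using this.symm
  have hS : S - σ g S = (n : k) • c g := by
    have hstep (i : ℕ) : σ g (c (g ^ i)) = c (g ^ (i + 1)) - c g := by
      rw [pow_succ', hc, add_sub_cancel_left]
    simp only [S, map_sum, hstep, sum_sub_distrib, hshift, sum_const, card_range,
      Nat.cast_smul_eq_nsmul, sub_sub_cancel]
  refine ⟨-(((hn.unit⁻¹ : kˣ) : k) • S), ?_⟩
  rw [map_neg, map_smul, neg_sub_neg, ← smul_sub, hS, smul_smul, IsUnit.val_inv_mul, one_smul]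

theorem map_conj_self_eq (hc : σ.IsCocycle₁ c) {s t : G} (hs : c s = 0) (n : ℕ)
    (hconj : t * s * t⁻¹ = s ^ n) : σ (s ^ n) (c t) = c t := by
  have hsn : c (s ^ n) = 0 := by simp [hc.map_pow, hs]
  have hts : t * s = s ^ n * t := by rw [← hconj, inv_mul_cancel_right]
  have := hc (s ^ n) t
  rwa [← hts, hc, hs, map_zero, add_zero, hsn, zero_add, eq_comm] at this

end IsCocycle₁

theorem linHom_apply_self_eq_iff_commute (ρ : Representation k G M) (g : G)
    (f : Module.End k M) : linHom ρ ρ g f = f ↔ Commute (ρ g) f := by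
  have hu : ρ g⁻¹ = ↑(ρ.asGroupHom g)⁻¹ := by rw [← map_inv, asGroupHom_apply]
  rw [linHom_apply, ← Module.End.mul_eq_comp, ← Module.End.mul_eq_comp, hu, ← mul_assoc,
    Units.mul_inv_eq_iff_eq_mul, asGroupHom_apply]
  exact Iff.rfl

end Cocycle

section FieldRepresentation

variable {F K G : Type*} [Group G]

theorem linHom_apply_lmul [CommSemiring F] [CommSemiring K] [Algebra F K]
    (ρ : Representation F G K) {g : G} {φ : K → K} (hg : ∀ a x, ρ g (a * x) = φ a * ρ g x)
    (a : K) : linHom ρ ρ g (Algebra.lmul F K a) = Algebra.lmul F K (φ a) := by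
  ext x
  simp [linHom_apply, hg]

theorem IsCocycle₁.exists_eq_coboundary_lmul_of_frobenius [Field F] [Fintype F] [Field K]
    [Finite K] [Algebra F K] {ρ : Representation F G K} {c : G → Module.End F K}
    (hc : (linHom ρ ρ).IsCocycle₁ c) {t : G} (ht : t ^ finrank F K = 1)
    (hρt : ∀ x, ρ t x = x ^ Fintype.card F) {a : K} (ha : c t = Algebra.lmul F K a) :
    ∃ b, c t = linHom ρ ρ t (Algebra.lmul F K b) - Algebra.lmul F K b := by
  set q := Fintype.card F
  have hρt_pow (i : ℕ) (x : K) : ρ (t ^ i) x = x ^ q ^ i := by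
    induction i with
    | zero => simp
    | succ i ih => rw [pow_succ', map_mul, Module.End.mul_apply, ih, hρt, ← pow_mul, pow_succ]
  have hlmul (i : ℕ) (x : K) :
      linHom ρ ρ (t ^ i) (Algebra.lmul F K x) = Algebra.lmul F K (x ^ q ^ i) :=
    linHom_apply_lmul ρ (φ := fun a => a ^ q ^ i) (fun a x => by rw [hρt_pow, hρt_pow, mul_pow]) x
  have hsum : ∑ i ∈ range (finrank F K), a ^ q ^ i = 0 := by
    have h := hc.map_pow t (finrank F K)
    rw [ht, hc.map_one, ha] at h
    simp only [hlmul, ← map_sum] at h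
    exact Algebra.lmul_injective (R := F) (h.symm.trans (map_zero _).symm)
  have htr : Algebra.trace F K a = 0 := by
    have h := FiniteField.algebraMap_trace_eq_sum_pow F K a
    rw [Nat.card_eq_fintype_card, hsum] at h
    exact (algebraMap F K).injective (h.trans (map_zero _).symm)
  obtain ⟨b, hb⟩ := FiniteField.exists_pow_card_sub_self_eq_of_trace_eq_zero htr
  refine ⟨b, ?_⟩
  rw [ha, ← pow_one t, hlmul, pow_one, ← map_sub, hb]

end FieldRepresentation

end Representation

theorem frobenius20_commutant_and_H1_vanishing_general
    {G : Type*} [Group G]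
    (s t : G) (hs5 : s ^ 5 = 1) (ht4 : t ^ 4 = 1)
    (hconj : t * s * t⁻¹ = s ^ 2)
    (hgen : Subgroup.closure ({s, t} : Set G) = ⊤)
    (ζ : GaloisField 2 4) (hζ : IsPrimitiveRoot ζ 5)
    (ρ : Representation (ZMod 2) G (GaloisField 2 4))
    (hρs : ∀ x, ρ s x = ζ * x)
    (hρt : ∀ x, ρ t x = x ^ 2) :
    -- 𝔥₀ = 𝔽₂[s] ≅ 𝔽₁₆ :
    (∀ h : Module.End (ZMod 2) (GaloisField 2 4),
      (h ∘ₗ ρ s = ρ s ∘ₗ h) ↔ (∃ a : GaloisField 2 4, ∀ x, h x = a * x)) ∧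
    (∀ h : Module.End (ZMod 2) (GaloisField 2 4),
      (h ∘ₗ ρ s = ρ s ∘ₗ h) ↔
        (∃ q : Polynomial (ZMod 2), h = Polynomial.aeval (ρ s) q)) ∧
    -- H¹(Δ, 𝔥) = 0 :
    (∀ c : G → Module.End (ZMod 2) (GaloisField 2 4),
      (∀ g₁ g₂ : G, c (g₁ * g₂) = c g₁ + (ρ g₁) ∘ₗ (c g₂) ∘ₗ (ρ g₁⁻¹)) →
        ∃ h₀ : Module.End (ZMod 2) (GaloisField 2 4),
          ∀ g : G, c g = (ρ g) ∘ₗ h₀ ∘ₗ (ρ g⁻¹) - h₀) := by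
  have hadj := GaloisField.adjoin_primitiveRoot_five_eq_top hζ
  have hS : ρ s = Algebra.lmul (ZMod 2) _ ζ := LinearMap.ext hρs
  have hcomm h : h ∘ₗ ρ s = ρ s ∘ₗ h ↔ ∃ a, Algebra.lmul (ZMod 2) (GaloisField 2 4) a = h := by
    rw [← AlgHom.mem_range, hS]
    exact commute_lmul_iff_mem_range_lmul hadj h
  refine ⟨fun h => ?_, fun h => ?_, fun c hc => ?_⟩
  · simp [hcomm, LinearMap.ext_iff, eq_comm]
  · rw [hcomm, ← AlgHom.mem_range, range_lmul_eq_range_aeval hadj, ← hS]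
    simp [eq_comm]
  replace hc : (linHom ρ ρ).IsCocycle₁ c := hc
  obtain ⟨m, hm⟩ := hc.exists_eq_coboundary_of_pow_eq_one hs5 (IsUnit.of_mul_eq_one 1 (by decide))
  have hc' := hc.sub_coboundary m
  have hct_comm : Commute (ρ s) (c t - (linHom ρ ρ t m - m)) := by
    have h := ((linHom_apply_self_eq_iff_commute ρ _ _).1
      (hc'.map_conj_self_eq (sub_eq_zero.2 hm) 2 hconj)).pow_left 3
    rwa [← map_pow, ← pow_mul, show 2 * 3 = 5 + 1 from rfl, pow_succ, hs5, one_mul] at h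
  obtain ⟨a, ha⟩ := (hcomm _).1 hct_comm.eq.symm
  obtain ⟨b, hb⟩ := hc'.exists_eq_coboundary_lmul_of_frobenius
    (by rwa [GaloisField.finrank 2 (by norm_num)]) (by simpa using hρt) ha.symm
  have hs_lmul : linHom ρ ρ s (Algebra.lmul (ZMod 2) _ b) = Algebra.lmul (ZMod 2) _ b :=
    linHom_apply_lmul ρ (φ := id) (fun a x => by rw [hρs, hρs, mul_left_comm]; rfl) b
  refine ⟨m + Algebra.lmul (ZMod 2) _ b, hc.eq_coboundary_of_closure hgen ?_⟩
  simp only [Set.forall_mem_insert, Set.mem_singleton_iff, forall_eq, map_add, hs_lmul]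
  constructor
  · rw [hm]
    abel
  · rw [sub_eq_iff_eq_add.1 hb]
    abel

/-- Let `Δ = ⟨σ, τ | σ⁵ = τ⁴ = 1, τστ⁻¹ = σ²⟩` be the Frobenius group
of order `20` acting on the 4-dimensional `𝔽₂`-vector space `E = 𝔽₁₆`, where `σ` acts
as multiplication by a primitive 5th root of unity `ζ` and `τ` acts as the Frobenius
`x ↦ x²`.  With `𝔥 = End_{𝔽₂}(E)` (with conjugation action), the subspace `𝔥₀` of
elements commuting with `σ` equals `𝔽₂[s] ≅ 𝔽₁₆` (`s` the action of `σ`, i.e. the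
multiplication operators), and `H¹(Δ, 𝔥) = 0` (every 1-cocycle is a coboundary). -/
theorem frobenius20_commutant_and_H1_vanishing
    {G : Type*} [Group G] [Finite G]
    (s t : G) (hs5 : s ^ 5 = 1) (ht4 : t ^ 4 = 1)
    (hconj : t * s * t⁻¹ = s ^ 2)
    (hgen : Subgroup.closure ({s, t} : Set G) = ⊤)
    (hcard : Nat.card G = 20)
    (ζ : GaloisField 2 4) (hζ : IsPrimitiveRoot ζ 5)
    (ρ : Representation (ZMod 2) G (GaloisField 2 4))
    (hρs : ∀ x, ρ s x = ζ * x)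
    (hρt : ∀ x, ρ t x = x ^ 2) :
    -- 𝔥₀ = 𝔽₂[s] ≅ 𝔽₁₆ :
    (∀ h : Module.End (ZMod 2) (GaloisField 2 4),
      (h ∘ₗ ρ s = ρ s ∘ₗ h) ↔ (∃ a : GaloisField 2 4, ∀ x, h x = a * x)) ∧
    (∀ h : Module.End (ZMod 2) (GaloisField 2 4),
      (h ∘ₗ ρ s = ρ s ∘ₗ h) ↔
        (∃ q : Polynomial (ZMod 2), h = Polynomial.aeval (ρ s) q)) ∧
    -- H¹(Δ, 𝔥) = 0 :
    (∀ c : G → Module.End (ZMod 2) (GaloisField 2 4),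
      (∀ g₁ g₂ : G, c (g₁ * g₂) = c g₁ + (ρ g₁) ∘ₗ (c g₂) ∘ₗ (ρ g₁⁻¹)) →
        ∃ h₀ : Module.End (ZMod 2) (GaloisField 2 4),
          ∀ g : G, c g = (ρ g) ∘ₗ h₀ ∘ₗ (ρ g⁻¹) - h₀) :=
  frobenius20_commutant_and_H1_vanishing_general s t hs5 ht4 hconj hgen ζ hζ ρ hρs hρt
end
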